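/- For the Dirichlet distribution with parameters α₁,…,α_K > 0, the loglikelihood for n i.i.d. observations is strictly concave on the parameter space {α ∈ ℝᴷ : αₖ > 0 for all k} provided n ≥ 1. -/

import Mathlib

/-!
Up to the factor `n` and a term affine in `α`, the loglikelihood is `-log B(α)`, where
`B(α) = ∏ Γ(αₖ) / Γ(∑ αₖ)` is the multivariate Beta function, so it suffices that `log B` is
strictly convex. Splitting off the first coordinate, `B(α) = B(α₀, ∑_{k>0} αₖ) · B(α₁, …)`, which
reduces this by induction on `K` to the two-variable Beta function. There strict log-convexity
is Hölder's inequality with its equality case: the pointwise weighted geometric mean of two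
distinct Beta densities has total mass `< 1`, and it is `B(mean) / (B(p)ˢ B(q)ᵗ)` times the Beta
density at the mean parameter.
-/

open Real MeasureTheory Set ProbabilityTheory

lemma integral_rpow_mul_rpow_lt_one {Ω : Type*} [MeasurableSpace Ω] {μ : Measure Ω}
    {f g : Ω → ℝ} (hf : 0 ≤ᵐ[μ] f) (hg : 0 ≤ᵐ[μ] g) (hfi : Integrable f μ)
    (hgi : Integrable g μ) (hf₁ : ∫ x, f x ∂μ = 1) (hg₁ : ∫ x, g x ∂μ = 1)
    (hfg : ¬f =ᵐ[μ] g) {s t : ℝ} (hs : 0 < s) (ht : 0 < t) (hst : s + t = 1) :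
    ∫ x, f x ^ s * g x ^ t ∂μ < 1 := by
  have hle : ∀ᵐ x ∂μ, f x ^ s * g x ^ t ≤ s * f x + t * g x := by
    filter_upwards [hf, hg] with x hfx hgx
    exact geom_mean_le_arith_mean2_weighted hs.le ht.le hfx hgx hst
  have hmean : Integrable (fun x => s * f x + t * g x) μ :=
    (hfi.const_mul s).add (hgi.const_mul t)
  have hgeom : Integrable (fun x => f x ^ s * g x ^ t) μ := by
    refine hmean.mono' ((hfi.aemeasurable.pow_const s).mul
      (hgi.aemeasurable.pow_const t)).aestronglyMeasurable ?_
    filter_upwards [hf, hg, hle] with x hfx hgx hx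
    rwa [Real.norm_of_nonneg (mul_nonneg (rpow_nonneg hfx s) (rpow_nonneg hgx t))]
  have hgap : 0 < ∫ x, (s * f x + t * g x) - f x ^ s * g x ^ t ∂μ := by
    rw [integral_pos_iff_support_of_nonneg_ae (hle.mono fun x hx => sub_nonneg.2 hx)
      (hmean.sub hgeom)]
    refine pos_iff_ne_zero.2 fun h₀ => hfg ?_
    filter_upwards [hf, hg, measure_eq_zero_iff_ae_notMem.1 h₀] with x hfx hgx hx
    by_contra hne
    exact hx (sub_pos.2 ((geom_mean_lt_arith_mean2_weighted_iff_of_pos hs ht hfx hgx hst).2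
      hne)).ne'
  rw [integral_sub hmean hgeom, integral_add (hfi.const_mul s) (hgi.const_mul t),
    integral_const_mul, integral_const_mul, hf₁, hg₁] at hgap
  linarith

lemma betaPDFReal_nonneg {a b : ℝ} (ha : 0 < a) (hb : 0 < b) (x : ℝ) :
    0 ≤ betaPDFReal a b x := by
  by_cases hx : 0 < x ∧ x < 1
  · exact (betaPDFReal_pos hx.1 hx.2 ha hb).le
  · simp [betaPDFReal, hx]

lemma integrable_betaPDFReal {a b : ℝ} (ha : 0 < a) (hb : 0 < b) :
    Integrable (betaPDFReal a b) := by
  refine ⟨(stronglyMeasurable_betaPDFReal a b).aestronglyMeasurable, ?_⟩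
  rw [hasFiniteIntegral_iff_ofReal (ae_of_all _ (betaPDFReal_nonneg ha hb))]
  exact (lintegral_betaPDF_eq_one ha hb).trans_lt ENNReal.one_lt_top

lemma integral_betaPDFReal {a b : ℝ} (ha : 0 < a) (hb : 0 < b) :
    ∫ x, betaPDFReal a b x = 1 := by
  rw [integral_eq_lintegral_of_nonneg_ae (ae_of_all _ (betaPDFReal_nonneg ha hb))
    (stronglyMeasurable_betaPDFReal a b).aestronglyMeasurable]
  exact congrArg ENNReal.toReal (lintegral_betaPDF_eq_one ha hb) |>.trans ENNReal.toReal_one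

lemma betaPDFReal_eq_exp {a b x : ℝ} (ha : 0 < a) (hb : 0 < b) (hx : x ∈ Ioo 0 1) :
    betaPDFReal a b x = exp ((a - 1) * log x + (b - 1) * log (1 - x) - log (beta a b)) := by
  rw [betaPDFReal, if_pos (show 0 < x ∧ x < 1 from hx), exp_sub, exp_add,
    exp_log (beta_pos ha hb), mul_comm (a - 1), mul_comm (b - 1), ← rpow_def_of_pos hx.1,
    ← rpow_def_of_pos (sub_pos.2 hx.2)]
  ring

lemma continuousOn_betaPDFReal {a b : ℝ} (ha : 0 < a) (hb : 0 < b) :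
    ContinuousOn (betaPDFReal a b) (Ioo 0 1) := by
  refine ContinuousOn.congr ?_ fun x hx => betaPDFReal_eq_exp ha hb hx
  have hlog : ContinuousOn log (Ioo 0 1) := continuousOn_log.mono fun x hx => hx.1.ne'
  have hlog' : ContinuousOn (fun x => log (1 - x)) (Ioo 0 1) :=
    continuousOn_log.comp (by fun_prop) fun x hx => (sub_pos.2 hx.2).ne'
  exact ((hlog.const_smul (a - 1)).add (hlog'.const_smul (b - 1))).sub continuousOn_const
    |>.rexp

lemma eq_zero_of_forall_mul_log_add_mul_log_one_sub_eq {p q c : ℝ}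
    (h : ∀ x ∈ Ioo (0 : ℝ) 1, p * log x + q * log (1 - x) = c) : p = 0 ∧ q = 0 := by
  have e₁ := h (1 / 4) ⟨by norm_num, by norm_num⟩
  have e₂ := h (1 / 2) ⟨by norm_num, by norm_num⟩
  have e₃ := h (3 / 4) ⟨by norm_num, by norm_num⟩
  rw [show (1 : ℝ) - 1 / 4 = 3 / 4 by norm_num] at e₁
  rw [show (1 : ℝ) - 1 / 2 = 1 / 2 by norm_num] at e₂
  rw [show (1 : ℝ) - 3 / 4 = 1 / 4 by norm_num] at e₃
  have hquarter : log (1 / 4 : ℝ) = 2 * log (1 / 2) := by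
    rw [show (1 / 4 : ℝ) = (1 / 2) ^ 2 by norm_num, Real.log_pow]; norm_num
  have hlt : log (1 / 4 : ℝ) < log (3 / 4) := log_lt_log (by norm_num) (by norm_num)
  have hneg : log (3 / 4 : ℝ) < 0 := log_neg (by norm_num) (by norm_num)
  have hpq : p = q := by
    have : (p - q) * (log (1 / 4) - log (3 / 4)) = 0 := by linear_combination e₁ - e₃
    exact sub_eq_zero.1 ((mul_eq_zero.1 this).resolve_right (sub_ne_zero.2 hlt.ne))
  subst hpq
  have : p * log (3 / 4) = 0 := by linear_combination e₁ - e₂ - p * hquarter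
  have hp := (mul_eq_zero.1 this).resolve_right hneg.ne
  exact ⟨hp, hp⟩

lemma eq_of_betaPDFReal_ae_eq {a₁ b₁ a₂ b₂ : ℝ} (ha₁ : 0 < a₁) (hb₁ : 0 < b₁) (ha₂ : 0 < a₂)
    (hb₂ : 0 < b₂) (h : betaPDFReal a₁ b₁ =ᵐ[volume] betaPDFReal a₂ b₂) :
    a₁ = a₂ ∧ b₁ = b₂ := by
  have heq := Measure.eqOn_Ioo_of_ae_eq volume (ae_restrict_of_ae h)
    (continuousOn_betaPDFReal ha₁ hb₁) (continuousOn_betaPDFReal ha₂ hb₂)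
  have := eq_zero_of_forall_mul_log_add_mul_log_one_sub_eq (p := a₁ - a₂) (q := b₁ - b₂)
    (c := log (beta a₁ b₁) - log (beta a₂ b₂)) fun x hx => by
      have := heq hx
      rw [betaPDFReal_eq_exp ha₁ hb₁ hx, betaPDFReal_eq_exp ha₂ hb₂ hx, exp_eq_exp] at this
      linear_combination this
  exact ⟨sub_eq_zero.1 this.1, sub_eq_zero.1 this.2⟩

lemma betaPDFReal_rpow_mul_rpow {a₁ b₁ a₂ b₂ s t : ℝ} (ha₁ : 0 < a₁) (hb₁ : 0 < b₁)
    (ha₂ : 0 < a₂) (hb₂ : 0 < b₂) (hs : 0 < s) (ht : 0 < t) (hst : s + t = 1) (x : ℝ) :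
    betaPDFReal a₁ b₁ x ^ s * betaPDFReal a₂ b₂ x ^ t =
      beta (s * a₁ + t * a₂) (s * b₁ + t * b₂) / (beta a₁ b₁ ^ s * beta a₂ b₂ ^ t) *
        betaPDFReal (s * a₁ + t * a₂) (s * b₁ + t * b₂) x := by
  by_cases hx : x ∈ Ioo 0 1
  · have ha : 0 < s * a₁ + t * a₂ := by positivity
    have hb : 0 < s * b₁ + t * b₂ := by positivity
    have hconst : beta (s * a₁ + t * a₂) (s * b₁ + t * b₂) / (beta a₁ b₁ ^ s * beta a₂ b₂ ^ t) =
        exp (log (beta (s * a₁ + t * a₂) (s * b₁ + t * b₂)) - log (beta a₁ b₁) * s -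
          log (beta a₂ b₂) * t) := by
      rw [exp_sub, exp_sub, exp_log (beta_pos ha hb), ← rpow_def_of_pos (beta_pos ha₁ hb₁),
        ← rpow_def_of_pos (beta_pos ha₂ hb₂), div_div]
    rw [betaPDFReal_eq_exp ha₁ hb₁ hx, betaPDFReal_eq_exp ha₂ hb₂ hx,
      betaPDFReal_eq_exp ha hb hx, ← exp_mul, ← exp_mul, ← exp_add, hconst, ← exp_add]
    congr 1
    linear_combination -(log x + log (1 - x)) * hst
  · have h0 : ∀ a b, betaPDFReal a b x = 0 := fun a b => if_neg hx
    simp [h0, zero_rpow hs.ne', zero_rpow ht.ne']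

lemma beta_lt_rpow_mul_rpow {a₁ b₁ a₂ b₂ s t : ℝ} (ha₁ : 0 < a₁) (hb₁ : 0 < b₁)
    (ha₂ : 0 < a₂) (hb₂ : 0 < b₂) (hne : (a₁, b₁) ≠ (a₂, b₂)) (hs : 0 < s) (ht : 0 < t)
    (hst : s + t = 1) :
    beta (s * a₁ + t * a₂) (s * b₁ + t * b₂) < beta a₁ b₁ ^ s * beta a₂ b₂ ^ t := by
  have ha : 0 < s * a₁ + t * a₂ := by positivity
  have hb : 0 < s * b₁ + t * b₂ := by positivity
  have key := integral_rpow_mul_rpow_lt_one (ae_of_all _ (betaPDFReal_nonneg ha₁ hb₁))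
    (ae_of_all _ (betaPDFReal_nonneg ha₂ hb₂)) (integrable_betaPDFReal ha₁ hb₁)
    (integrable_betaPDFReal ha₂ hb₂) (integral_betaPDFReal ha₁ hb₁)
    (integral_betaPDFReal ha₂ hb₂)
    (fun h => hne (Prod.ext_iff.2 (eq_of_betaPDFReal_ae_eq ha₁ hb₁ ha₂ hb₂ h))) hs ht hst
  simp only [betaPDFReal_rpow_mul_rpow ha₁ hb₁ ha₂ hb₂ hs ht hst] at key
  have hpos : 0 < beta a₁ b₁ ^ s * beta a₂ b₂ ^ t := by
    have := beta_pos ha₁ hb₁; have := beta_pos ha₂ hb₂; positivity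
  rwa [integral_const_mul, integral_betaPDFReal ha hb, mul_one, div_lt_one hpos] at key

lemma log_beta {a b : ℝ} (ha : 0 < a) (hb : 0 < b) :
    log (beta a b) = log (Gamma a) + log (Gamma b) - log (Gamma (a + b)) := by
  rw [beta, log_div (mul_pos (Gamma_pos_of_pos ha) (Gamma_pos_of_pos hb)).ne'
    (Gamma_pos_of_pos (add_pos ha hb)).ne',
    log_mul (Gamma_pos_of_pos ha).ne' (Gamma_pos_of_pos hb).ne']

theorem strictConvexOn_log_beta :
    StrictConvexOn ℝ (Ioi 0 ×ˢ Ioi 0) fun p : ℝ × ℝ => log (beta p.1 p.2) := by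
  refine ⟨(convex_Ioi 0).prod (convex_Ioi 0), ?_⟩
  rintro ⟨a₁, b₁⟩ ⟨ha₁ : 0 < a₁, hb₁ : 0 < b₁⟩ ⟨a₂, b₂⟩ ⟨ha₂ : 0 < a₂, hb₂ : 0 < b₂⟩ hne s t hs ht
    hst
  have hB₁ := beta_pos ha₁ hb₁
  have hB₂ := beta_pos ha₂ hb₂
  simp only [Prod.smul_mk, Prod.mk_add_mk, smul_eq_mul]
  calc log (beta (s * a₁ + t * a₂) (s * b₁ + t * b₂))
      < log (beta a₁ b₁ ^ s * beta a₂ b₂ ^ t) :=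
        log_lt_log (beta_pos (by positivity) (by positivity))
          (beta_lt_rpow_mul_rpow ha₁ hb₁ ha₂ hb₂ hne hs ht hst)
    _ = s * log (beta a₁ b₁) + t * log (beta a₂ b₂) := by
        rw [log_mul (rpow_pos_of_pos hB₁ s).ne' (rpow_pos_of_pos hB₂ t).ne', log_rpow hB₁,
          log_rpow hB₂]

lemma convex_setOf_forall_pos (ι : Type*) : Convex ℝ {α : ι → ℝ | ∀ k, 0 < α k} :=
  fun _ hα _ hα' _ _ hs ht hst k => convex_Ioi (𝕜 := ℝ) (0 : ℝ) (hα k) (hα' k) hs ht hst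

noncomputable def logMultiBeta {K : ℕ} (α : Fin K → ℝ) : ℝ :=
  ∑ k, log (Gamma (α k)) - log (Gamma (∑ k, α k))

lemma sum_tail_pos {K : ℕ} (hK : K ≠ 0) {α : Fin (K + 1) → ℝ} (hα : ∀ k, 0 < α k) :
    0 < ∑ k, Fin.tail α k :=
  Finset.sum_pos (fun k _ => hα k.succ) (Finset.univ_nonempty_iff.2 ⟨⟨0, Nat.pos_of_ne_zero hK⟩⟩)

lemma logMultiBeta_eq_log_beta_add {K : ℕ} (hK : K ≠ 0) {α : Fin (K + 1) → ℝ}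
    (hα : ∀ k, 0 < α k) :
    logMultiBeta α = log (beta (α 0) (∑ k, Fin.tail α k)) + logMultiBeta (Fin.tail α) := by
  rw [log_beta (hα 0) (sum_tail_pos hK hα), logMultiBeta, logMultiBeta, Fin.sum_univ_succ,
    Fin.sum_univ_succ α]
  simp only [Fin.tail]
  ring

lemma logMultiBeta_combo {K : ℕ} (hK : K ≠ 0) {α α' : Fin (K + 1) → ℝ} (hα : ∀ k, 0 < α k)
    (hα' : ∀ k, 0 < α' k) {s t : ℝ} (hs : 0 ≤ s) (ht : 0 ≤ t) (hst : s + t = 1) :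
    logMultiBeta (s • α + t • α') =
      log (beta (s * α 0 + t * α' 0) (s * ∑ k, Fin.tail α k + t * ∑ k, Fin.tail α' k)) +
        logMultiBeta (s • Fin.tail α + t • Fin.tail α') := by
  rw [logMultiBeta_eq_log_beta_add hK (convex_setOf_forall_pos _ hα hα' hs ht hst),
    Finset.mul_sum, Finset.mul_sum, ← Finset.sum_add_distrib]
  rfl

theorem strictConvexOn_logMultiBeta {K : ℕ} (hK : 2 ≤ K) :
    StrictConvexOn ℝ {α : Fin K → ℝ | ∀ k, 0 < α k} logMultiBeta := by
  induction K, hK using Nat.le_induction with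
  | base =>
    refine ⟨convex_setOf_forall_pos _, fun α hα α' hα' hne s t hs ht hst => ?_⟩
    have hne' : (α 0, α 1) ≠ (α' 0, α' 1) := by
      intro h
      simp only [Prod.mk.injEq] at h
      exact hne (funext fun i => by fin_cases i <;> simp [h.1, h.2])
    have := strictConvexOn_log_beta.2 (mk_mem_prod (hα 0) (hα 1)) (mk_mem_prod (hα' 0) (hα' 1))
      hne' hs ht hst
    simp only [Prod.smul_mk, Prod.mk_add_mk, smul_eq_mul] at this
    rw [logMultiBeta_combo one_ne_zero hα hα' hs.le ht.le hst,
      logMultiBeta_eq_log_beta_add one_ne_zero hα, logMultiBeta_eq_log_beta_add one_ne_zero hα']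
    simpa [logMultiBeta, Fin.tail] using this
  | succ K hK ih =>
    refine ⟨convex_setOf_forall_pos _, fun α hα α' hα' hne s t hs ht hst => ?_⟩
    have hK₀ : K ≠ 0 := by omega
    have hα₀ := mk_mem_prod (hα 0) (sum_tail_pos hK₀ hα)
    have hα₀' := mk_mem_prod (hα' 0) (sum_tail_pos hK₀ hα')
    rw [logMultiBeta_combo hK₀ hα hα' hs.le ht.le hst, logMultiBeta_eq_log_beta_add hK₀ hα,
      logMultiBeta_eq_log_beta_add hK₀ hα', smul_eq_mul, smul_eq_mul]
    by_cases htails : Fin.tail α = Fin.tail α'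
    · have hhead : (α 0, ∑ k, Fin.tail α k) ≠ (α' 0, ∑ k, Fin.tail α' k) := by
        intro h
        simp only [Prod.mk.injEq] at h
        exact hne (by rw [← Fin.cons_self_tail α, ← Fin.cons_self_tail α', htails, h.1])
      have := strictConvexOn_log_beta.2 hα₀ hα₀' hhead hs ht hst
      simp only [Prod.smul_mk, Prod.mk_add_mk, smul_eq_mul] at this
      rw [← htails] at this ⊢
      rw [Convex.combo_self hst]
      linear_combination this - logMultiBeta (Fin.tail α) * hst
    · have h₁ := ih.2 (x := Fin.tail α) (y := Fin.tail α') (fun k => hα k.succ)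
        (fun k => hα' k.succ) htails hs ht hst
      have h₂ := strictConvexOn_log_beta.convexOn.2 hα₀ hα₀' hs.le ht.le hst
      simp only [Prod.smul_mk, Prod.mk_add_mk, smul_eq_mul] at h₁ h₂
      linarith

/-- The Dirichlet loglikelihood for `n ≥ 1` i.i.d. observations is strictly
concave on the parameter space `{α : ∀ k, αₖ > 0}`. -/
theorem dirichlet_loglik_strictConcave {n K : ℕ} (hn : 1 ≤ n) (hK : 2 ≤ K)
    (y : Fin n → Fin K → ℝ) :
    StrictConcaveOn ℝ {α : Fin K → ℝ | ∀ k, 0 < α k}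
      (fun α =>
        (n : ℝ) * Real.log (Real.Gamma (∑ k, α k)) -
          (n : ℝ) * ∑ k, Real.log (Real.Gamma (α k)) +
          ∑ k, (α k - 1) * ∑ r, Real.log (y r k)) := by
  refine ⟨convex_setOf_forall_pos _, fun α hα α' hα' hne s t hs ht hst => ?_⟩
  have hG := (strictConvexOn_logMultiBeta hK).2 hα hα' hne hs ht hst
  have hlin : ∑ k, ((s • α + t • α') k - 1) * ∑ r, log (y r k) =
      s * ∑ k, (α k - 1) * ∑ r, log (y r k) + t * ∑ k, (α' k - 1) * ∑ r, log (y r k) := by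
    rw [Finset.mul_sum, Finset.mul_sum, ← Finset.sum_add_distrib]
    refine Finset.sum_congr rfl fun k _ => ?_
    simp only [Pi.add_apply, Pi.smul_apply, smul_eq_mul]
    linear_combination (∑ r, log (y r k)) * hst
  simp only [logMultiBeta, smul_eq_mul] at hG ⊢
  rw [hlin]
  linear_combination mul_lt_mul_of_pos_left hG (by exact_mod_cast hn : (0 : ℝ) < n)
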